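/- Let W be a symmetric positive semidefinite n×n matrix with nonnegative entries and diagonal d, let c ≥ 0, δ ∈ (0,1), and assume w_{ii} ≤ δ·c for all i (all items are δ-light). Let y ∈ [0,1]ⁿ satisfy yᵀWy ≤ c and dᵀy ≤ c, let α ∈ (0,1), and let X = (X₁,…,X_n) be stochastically independent {0,1}-valued random variables with ℙ[X_i = 1] = α·y_i. Then for every ℓ ∈ {1,…,n}: ℙ[ XᵀWX ≤ c and X_ℓ = 1 ] ≥ (1 − g(α,δ)) · ℙ[X_ℓ = 1], where g(α,δ) = α·(1 + (1 + δ^{1/3})³) + (1−α)·δ. -/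

import Mathlib

open MeasureTheory ProbabilityTheory

/-- The quadratic form `xᵀ W x`. -/
noncomputable def quadForm {ι : Type*} [Fintype ι] (W : Matrix ι ι ℝ) (x : ι → ℝ) : ℝ :=
  ∑ i, ∑ j, W i j * x i * x j

/-!
Write `p = α y` and `E_k = {X_k = 1}`. Since `X_i X_j X_ℓ` is the indicator of
`E_i ∩ E_j ∩ E_ℓ`, independence gives `𝔼[XᵀWX · X_ℓ] = ∑ W_ij ∏_{k ∈ {i,j,ℓ}} p_k`, and this is at
most `p_ℓ (uᵀWu + ∑ W_ii p_i)` with `u = p + e_ℓ`. Minkowski's inequality for the seminorm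
`x ↦ √(xᵀWx)` gives `uᵀWu ≤ (α √c + √(W_ℓℓ))² ≤ c (α + √δ)²`, while `∑ W_ii p_i ≤ α c`.
Markov's inequality then bounds `ℙ[XᵀWX > c, X_ℓ = 1]` by `((α + √δ)² + α) p_ℓ ≤ g(α, δ) p_ℓ`.
-/

open Matrix

lemma prod_triple_le {ι : Type*} [DecidableEq ι] {p : ι → ℝ} (hp : 0 ≤ p) (i j ℓ : ι) :
    ∏ k ∈ {i, j, ℓ}, p k
      ≤ p ℓ * ((p + Pi.single ℓ 1 : ι → ℝ) i * (p + Pi.single ℓ 1 : ι → ℝ) j +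
        if i = j then p i else 0) := by
  by_cases hiℓ : i = ℓ <;> by_cases hjℓ : j = ℓ <;> by_cases hij : i = j <;>
    simp_all [Finset.prod_insert] <;>
    nlinarith [mul_nonneg (hp ℓ) (hp ℓ), mul_nonneg (mul_nonneg (hp ℓ) (hp ℓ)) (hp ℓ),
      mul_nonneg (mul_nonneg (hp ℓ) (hp ℓ)) (hp i), mul_nonneg (mul_nonneg (hp ℓ) (hp ℓ)) (hp j),
      mul_nonneg (mul_nonneg (hp ℓ) (hp i)) (hp i), mul_nonneg (mul_nonneg (hp ℓ) (hp j)) (hp j)]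

section QuadForm

variable {ι : Type*} [Fintype ι] {W : Matrix ι ι ℝ}

lemma quadForm_eq_dotProduct_mulVec (W : Matrix ι ι ℝ) (x : ι → ℝ) :
    quadForm W x = x ⬝ᵥ W *ᵥ x := by
  simp only [quadForm, dotProduct, mulVec, Finset.mul_sum]
  exact Finset.sum_congr rfl fun _ _ => Finset.sum_congr rfl fun _ _ => by ring

lemma quadForm_smul (W : Matrix ι ι ℝ) (a : ℝ) (x : ι → ℝ) :
    quadForm W (a • x) = a ^ 2 * quadForm W x := by
  simp only [quadForm_eq_dotProduct_mulVec, mulVec_smul, smul_dotProduct, dotProduct_smul,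
    smul_eq_mul]
  ring

lemma quadForm_single_one [DecidableEq ι] (W : Matrix ι ι ℝ) (i : ι) :
    quadForm W (Pi.single i 1) = W i i := by
  simp [quadForm_eq_dotProduct_mulVec]

namespace Matrix.PosSemidef

lemma quadForm_nonneg (hW : W.PosSemidef) (x : ι → ℝ) : 0 ≤ quadForm W x := by
  simpa [quadForm_eq_dotProduct_mulVec] using hW.dotProduct_mulVec_nonneg x

lemma quadForm_add_le (hW : W.PosSemidef) (x z : ι → ℝ) :
    quadForm W (x + z) ≤ (√(quadForm W x) + √(quadForm W z)) ^ 2 := by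
  let _ := W.toSeminormedAddCommGroup hW
  let _ := W.toInnerProductSpace hW
  have hq : ∀ v : ι → ℝ, quadForm W v = inner ℝ v v := fun v => by
    rw [quadForm_eq_dotProduct_mulVec, dotProduct_comm]
    rfl
  have hcs : inner ℝ x z ≤ √(inner ℝ x x) * √(inner ℝ z z) := by
    rw [← Real.sqrt_mul real_inner_self_nonneg]
    exact (le_abs_self _).trans
      (Real.abs_le_sqrt (by simpa [sq] using real_inner_mul_inner_self_le x z))
  simp only [hq]
  rw [add_sq, Real.sq_sqrt real_inner_self_nonneg, Real.sq_sqrt real_inner_self_nonneg,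
    real_inner_add_add_self]
  linarith

end Matrix.PosSemidef

lemma sum_mul_prod_triple_le [DecidableEq ι] (hW : ∀ i j, 0 ≤ W i j) {p : ι → ℝ} (hp : 0 ≤ p)
    (ℓ : ι) :
    ∑ i, ∑ j, W i j * ∏ k ∈ {i, j, ℓ}, p k
      ≤ p ℓ * (quadForm W (p + Pi.single ℓ 1) + ∑ i, W i i * p i) := by
  calc ∑ i, ∑ j, W i j * ∏ k ∈ {i, j, ℓ}, p k
      ≤ ∑ i, ∑ j, W i j * (p ℓ * ((p + Pi.single ℓ 1 : ι → ℝ) i *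
          (p + Pi.single ℓ 1 : ι → ℝ) j + if i = j then p i else 0)) := by
        gcongr with i _ j _
        · exact hW i j
        · exact prod_triple_le hp i j ℓ
    _ = _ := by
        simp only [quadForm, mul_add, Finset.sum_add_distrib, Finset.mul_sum, mul_ite, mul_zero,
          Finset.sum_ite_eq, Finset.mem_univ, if_true]
        congr 1 <;> refine Finset.sum_congr rfl fun i _ => ?_
        · exact Finset.sum_congr rfl fun j _ => by ring
        · ring

lemma quadForm_smul_add_single_add_le [DecidableEq ι] (hpsd : W.PosSemidef) {y : ι → ℝ}
    {c δ α : ℝ} (hα : 0 ≤ α) (h1 : quadForm W y ≤ c) (h2 : ∑ i, W i i * y i ≤ c) (ℓ : ι)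
    (hℓ : W ℓ ℓ ≤ δ * c) :
    quadForm W (α • y + Pi.single ℓ 1) + ∑ i, W i i * (α • y) i ≤ c * ((α + √δ) ^ 2 + α) := by
  have hc : 0 ≤ c := (hpsd.quadForm_nonneg y).trans h1
  have hquad : quadForm W (α • y + Pi.single ℓ 1) ≤ c * (α + √δ) ^ 2 :=
    calc quadForm W (α • y + Pi.single ℓ 1)
        ≤ (√(quadForm W (α • y)) + √(quadForm W (Pi.single ℓ 1))) ^ 2 :=
          hpsd.quadForm_add_le _ _
      _ ≤ (α * √c + √δ * √c) ^ 2 := by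
        rw [quadForm_smul, quadForm_single_one, Real.sqrt_mul (sq_nonneg α), Real.sqrt_sq hα,
          ← Real.sqrt_mul' _ hc]
        gcongr
      _ = c * (α + √δ) ^ 2 := by rw [← add_mul, mul_pow, Real.sq_sqrt hc, mul_comm]
  have hdiag : ∑ i, W i i * (α • y) i ≤ c * α := by
    simp only [Pi.smul_apply, smul_eq_mul, mul_left_comm _ α, ← Finset.mul_sum]
    linarith [mul_le_mul_of_nonneg_left h2 hα]
  linarith

end QuadForm

lemma add_sqrt_sq_add_le {α δ : ℝ} (hα0 : 0 ≤ α) (hα1 : α ≤ 1) (hδ0 : 0 < δ) (hδ1 : δ ≤ 1) :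
    (α + √δ) ^ 2 + α ≤ α * (1 + (1 + δ ^ ((1:ℝ) / 3)) ^ 3) + (1 - α) * δ := by
  have hs2 : √δ ^ 2 = δ := Real.sq_sqrt hδ0.le
  set t := δ ^ ((1:ℝ) / 3)
  have ht0 : 0 ≤ t := by positivity
  have hδt : δ = t ^ 3 := by
    rw [← Real.rpow_natCast, ← Real.rpow_mul hδ0.le]
    norm_num
  have hst : √δ ≤ t := by
    rw [Real.sqrt_eq_rpow]
    exact Real.rpow_le_rpow_of_exponent_ge hδ0 hδ1 (by norm_num)
  generalize √δ = s at hst hs2 ⊢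
  rw [add_sq, hs2, hδt]
  nlinarith [mul_nonneg hα0 (sub_nonneg.2 hst), mul_nonneg hα0 (mul_nonneg ht0 ht0),
    mul_nonneg hα0 (sub_nonneg.2 hα1), mul_nonneg hα0 ht0]

lemma quadForm_mul_eq_sum_indicator {ι Ω : Type*} [Fintype ι] {X : ι → Ω → ℝ}
    (hbin : ∀ i ω, X i ω = 0 ∨ X i ω = 1) (W : Matrix ι ι ℝ) (ℓ : ι) (ω : Ω) :
    quadForm W (X · ω) * X ℓ ω
      = ∑ i, ∑ j, (X i ⁻¹' {1} ∩ (X j ⁻¹' {1} ∩ X ℓ ⁻¹' {1})).indicator (fun _ => W i j) ω := by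
  simp only [quadForm, Finset.sum_mul]
  refine Finset.sum_congr rfl fun i _ => Finset.sum_congr rfl fun j _ => ?_
  rcases hbin i ω with hi | hi <;> rcases hbin j ω with hj | hj <;>
    rcases hbin ℓ ω with hℓ | hℓ <;> simp [Set.indicator, hi, hj, hℓ]

section Bernoulli

variable {ι Ω : Type*} [MeasurableSpace Ω] {μ : Measure Ω} {X : ι → Ω → ℝ}

lemma ProbabilityTheory.iIndepFun.measure_inter_inter_preimage_one [DecidableEq ι]
    (hindep : iIndepFun X μ) (i j ℓ : ι) :
    μ (X i ⁻¹' {1} ∩ (X j ⁻¹' {1} ∩ X ℓ ⁻¹' {1})) = ∏ k ∈ {i, j, ℓ}, μ (X k ⁻¹' {1}) := by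
  rw [← hindep.measure_inter_preimage_eq_mul {i, j, ℓ} fun _ _ => measurableSet_singleton 1]
  simp only [Finset.set_biInter_insert, Finset.set_biInter_singleton]

lemma mul_measureReal_quadForm_gt_le [Fintype ι] [DecidableEq ι] [IsFiniteMeasure μ]
    {W : Matrix ι ι ℝ} (hW : ∀ i j, 0 ≤ W i j) (hmeas : ∀ i, Measurable (X i))
    (hindep : iIndepFun X μ) (hbin : ∀ i ω, X i ω = 0 ∨ X i ω = 1) {c : ℝ} (hc : 0 ≤ c)
    (ℓ : ι) :
    c * μ.real {ω | X ℓ ω = 1 ∧ c < quadForm W (X · ω)}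
      ≤ ∑ i, ∑ j, W i j * ∏ k ∈ {i, j, ℓ}, μ.real (X k ⁻¹' {1}) := by
  have hE : ∀ i j, MeasurableSet (X i ⁻¹' {1} ∩ (X j ⁻¹' {1} ∩ X ℓ ⁻¹' {1})) := fun i j =>
    (hmeas i (measurableSet_singleton 1)).inter
      ((hmeas j (measurableSet_singleton 1)).inter (hmeas ℓ (measurableSet_singleton 1)))
  set F : Ω → ℝ := fun ω => quadForm W (X · ω) * X ℓ ω
  have hF : F = fun ω => ∑ i, ∑ j,
      (X i ⁻¹' {1} ∩ (X j ⁻¹' {1} ∩ X ℓ ⁻¹' {1})).indicator (fun _ => W i j) ω :=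
    funext (quadForm_mul_eq_sum_indicator hbin W ℓ)
  have hF0 : 0 ≤ F := by
    rw [hF]
    exact fun ω => Finset.sum_nonneg fun i _ => Finset.sum_nonneg fun j _ =>
      Set.indicator_nonneg (fun _ _ => hW i j) ω
  have hFint : Integrable F μ := by
    rw [hF]
    exact integrable_finsetSum _ fun i _ => integrable_finsetSum _ fun j _ =>
      (integrable_const (W i j)).indicator (hE i j)
  have hsub : {ω | X ℓ ω = 1 ∧ c < quadForm W (X · ω)} ⊆ {ω | c ≤ F ω} := by
    rintro ω ⟨hℓ, hlt⟩
    simp [F, hℓ, hlt.le]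
  calc c * μ.real {ω | X ℓ ω = 1 ∧ c < quadForm W (X · ω)}
      ≤ c * μ.real {ω | c ≤ F ω} := mul_le_mul_of_nonneg_left (measureReal_mono hsub) hc
    _ ≤ ∫ ω, F ω ∂μ := mul_meas_ge_le_integral_of_nonneg (ae_of_all _ hF0) hFint c
    _ = ∑ i, ∑ j, W i j * ∏ k ∈ {i, j, ℓ}, μ.real (X k ⁻¹' {1}) := by
      rw [hF, integral_finsetSum _ fun i _ => integrable_finsetSum _ fun j _ =>
        (integrable_const (W i j)).indicator (hE i j)]
      refine Finset.sum_congr rfl fun i _ => ?_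
      rw [integral_finsetSum _ fun j _ => (integrable_const (W i j)).indicator (hE i j)]
      refine Finset.sum_congr rfl fun j _ => ?_
      rw [integral_indicator_const _ (hE i j), smul_eq_mul, mul_comm, measureReal_def,
        hindep.measure_inter_inter_preimage_one, ENNReal.toReal_prod]
      rfl

theorem measureReal_quadForm_gt_le [Fintype ι] [DecidableEq ι] [IsFiniteMeasure μ]
    {W : Matrix ι ι ℝ} (hpsd : W.PosSemidef) (hW : ∀ i j, 0 ≤ W i j) {c δ α : ℝ}
    (hlight : ∀ i, W i i ≤ δ * c) {y : ι → ℝ} (hy : 0 ≤ y) (h1 : quadForm W y ≤ c)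
    (h2 : ∑ i, W i i * y i ≤ c) (hα : 0 ≤ α) (hmeas : ∀ i, Measurable (X i))
    (hindep : iIndepFun X μ) (hbin : ∀ i ω, X i ω = 0 ∨ X i ω = 1)
    (hdist : ∀ i, μ (X i ⁻¹' {1}) = ENNReal.ofReal (α * y i)) (ℓ : ι) :
    μ.real {ω | X ℓ ω = 1 ∧ c < quadForm W (X · ω)} ≤ ((α + √δ) ^ 2 + α) * (α * y ℓ) := by
  set p := α • y
  have hp : 0 ≤ p := fun i => mul_nonneg hα (hy i)
  have hprob : ∀ i, μ.real (X i ⁻¹' {1}) = p i := fun i =>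
    (congrArg ENNReal.toReal (hdist i)).trans (ENNReal.toReal_ofReal (hp i))
  rcases ((hpsd.quadForm_nonneg y).trans h1).eq_or_lt with rfl | hc
  · have hW0 : W = 0 := hpsd.trace_eq_zero_iff.mp <| le_antisymm
      (Finset.sum_nonpos fun i _ => by simpa using hlight i) hpsd.trace_nonneg
    have hempty : μ.real {ω | X ℓ ω = 1 ∧ 0 < quadForm W (X · ω)} = 0 := by
      simp [hW0, quadForm]
    exact hempty.trans_le (mul_nonneg (add_nonneg (sq_nonneg (α + √δ)) hα) (hp ℓ))
  refine le_of_mul_le_mul_left ?_ hc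
  calc c * μ.real {ω | X ℓ ω = 1 ∧ c < quadForm W (X · ω)}
      ≤ ∑ i, ∑ j, W i j * ∏ k ∈ {i, j, ℓ}, p k := by
        simpa only [hprob] using mul_measureReal_quadForm_gt_le hW hmeas hindep hbin hc.le ℓ
    _ ≤ p ℓ * (quadForm W (p + Pi.single ℓ 1) + ∑ i, W i i * p i) :=
        sum_mul_prod_triple_le hW hp ℓ
    _ ≤ p ℓ * (c * ((α + √δ) ^ 2 + α)) :=
        mul_le_mul_of_nonneg_left (quadForm_smul_add_single_add_le hpsd hα h1 h2 ℓ (hlight ℓ))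
          (hp ℓ)
    _ = c * (((α + √δ) ^ 2 + α) * (α * y ℓ)) := by simp only [p, Pi.smul_apply, smul_eq_mul]; ring

end Bernoulli

theorem stmt_13_general {n : ℕ} (W : Matrix (Fin n) (Fin n) ℝ) (hpsd : W.PosSemidef)
    (hW : ∀ i j, 0 ≤ W i j) (c : ℝ)
    (δ : ℝ) (hδ : δ ∈ Set.Ioo (0:ℝ) 1) (hlight : ∀ i, W i i ≤ δ * c)
    (y : Fin n → ℝ) (hy : ∀ i, y i ∈ Set.Icc (0:ℝ) 1)
    (h1 : quadForm W y ≤ c) (h2 : (∑ i, W i i * y i) ≤ c)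
    (α : ℝ) (hα : α ∈ Set.Ioo (0:ℝ) 1)
    {Ω : Type*} [MeasurableSpace Ω] (μ : Measure Ω) [IsProbabilityMeasure μ]
    (X : Fin n → Ω → ℝ) (hmeas : ∀ i, Measurable (X i))
    (hindep : iIndepFun X μ)
    (hbin : ∀ i ω, X i ω = 0 ∨ X i ω = 1)
    (hdist : ∀ i, μ {ω | X i ω = 1} = ENNReal.ofReal (α * y i))
    (ℓ : Fin n) :
    ENNReal.ofReal (1 - (α * (1 + (1 + δ ^ ((1:ℝ) / 3)) ^ 3) + (1 - α) * δ)) *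
        μ {ω | X ℓ ω = 1}
      ≤ μ {ω | quadForm W (fun i => X i ω) ≤ c ∧ X ℓ ω = 1} := by
  obtain ⟨hδ0, hδ1⟩ := hδ
  obtain ⟨hα0, hα1⟩ := hα
  set G := α * (1 + (1 + δ ^ ((1:ℝ) / 3)) ^ 3) + (1 - α) * δ
  have hp : 0 ≤ α * y ℓ := mul_nonneg hα0.le (hy ℓ).1
  have hbad : μ.real {ω | X ℓ ω = 1 ∧ c < quadForm W (X · ω)} ≤ G * (α * y ℓ) :=
    (measureReal_quadForm_gt_le hpsd hW hlight (fun i => (hy i).1) h1 h2 hα0.le hmeas hindep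
      hbin hdist ℓ).trans
      (mul_le_mul_of_nonneg_right (add_sqrt_sq_add_le hα0.le hα1.le hδ0 hδ1.le) hp)
  have hcover : μ.real {ω | X ℓ ω = 1}
      ≤ μ.real {ω | quadForm W (X · ω) ≤ c ∧ X ℓ ω = 1}
        + μ.real {ω | X ℓ ω = 1 ∧ c < quadForm W (X · ω)} := by
    refine (measureReal_mono fun ω hω => ?_).trans (measureReal_union_le _ _)
    rcases le_or_gt (quadForm W (X · ω)) c with h | h
    · exact Or.inl ⟨h, hω⟩
    · exact Or.inr ⟨hω, h⟩
  rw [hdist ℓ, ← ENNReal.ofReal_mul' hp, ← ENNReal.ofReal_toReal (measure_ne_top μ _)]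
  refine ENNReal.ofReal_le_ofReal ?_
  rw [measureReal_def, hdist ℓ, ENNReal.toReal_ofReal hp] at hcover
  rw [← measureReal_def]
  linarith

theorem stmt_13 {n : ℕ} (W : Matrix (Fin n) (Fin n) ℝ) (hpsd : W.PosSemidef)
    (hW : ∀ i j, 0 ≤ W i j) (c : ℝ) (hc : 0 ≤ c)
    (δ : ℝ) (hδ : δ ∈ Set.Ioo (0:ℝ) 1) (hlight : ∀ i, W i i ≤ δ * c)
    (y : Fin n → ℝ) (hy : ∀ i, y i ∈ Set.Icc (0:ℝ) 1)
    (h1 : quadForm W y ≤ c) (h2 : (∑ i, W i i * y i) ≤ c)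
    (α : ℝ) (hα : α ∈ Set.Ioo (0:ℝ) 1)
    {Ω : Type*} [MeasurableSpace Ω] (μ : Measure Ω) [IsProbabilityMeasure μ]
    (X : Fin n → Ω → ℝ) (hmeas : ∀ i, Measurable (X i))
    (hindep : iIndepFun X μ)
    (hbin : ∀ i ω, X i ω = 0 ∨ X i ω = 1)
    (hdist : ∀ i, μ {ω | X i ω = 1} = ENNReal.ofReal (α * y i))
    (ℓ : Fin n) :
    ENNReal.ofReal (1 - (α * (1 + (1 + δ ^ ((1:ℝ) / 3)) ^ 3) + (1 - α) * δ)) *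
        μ {ω | X ℓ ω = 1}
      ≤ μ {ω | quadForm W (fun i => X i ω) ≤ c ∧ X ℓ ω = 1} :=
  stmt_13_general W hpsd hW c δ hδ hlight y hy h1 h2 α hα μ X hmeas hindep hbin hdist ℓ
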